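/- Let M be an m×m symmetric matrix satisfying (1+ζ/2)^{-1} I ⪯ M ⪯ (1−ζ/2)^{-1} I for ζ ∈ [0,1), and let α be a scalar with |α − 1| ≤ ζ(1−ζ)/2. Then ‖I − αM‖₂ ≤ ζ. -/

import Mathlib

/-!
For a symmetric operator the norm is the supremum of `|⟪T x, x⟫| / ‖x‖ ^ 2`. With `s = ‖x‖ ^ 2`
and `q = ⟪M x, x⟫`, the Loewner bounds give `|s - q| ≤ (ζ / 2) q` and `(1 - ζ / 2) q ≤ s`, hence
`|⟪(I - α M) x, x⟫| = |(s - q) - (α - 1) q| ≤ (ζ / 2 + ζ (1 - ζ) / 2) q = ζ (1 - ζ / 2) q ≤ ζ s`.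
-/

open Matrix

noncomputable def specNorm {m n : ℕ} (A : Matrix (Fin m) (Fin n) ℝ) : ℝ :=
  ‖LinearMap.toContinuousLinearMap (Matrix.toEuclideanLin A)‖

noncomputable def euclNorm {n : ℕ} (v : Fin n → ℝ) : ℝ := Real.sqrt (∑ i, (v i)^2)

noncomputable def frobNorm {m n : ℕ} (A : Matrix (Fin m) (Fin n) ℝ) : ℝ :=
  Real.sqrt (∑ i, ∑ j, (A i j)^2)

open RCLike in
theorem ContinuousLinearMap.opNorm_le_of_abs_re_inner_self_le
    {𝕜 E : Type*} [RCLike 𝕜] [NormedAddCommGroup E] [InnerProductSpace 𝕜 E]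
    {T : E →L[𝕜] E} (hT : (T : E →ₗ[𝕜] E).IsSymmetric) {c : ℝ} (hc : 0 ≤ c)
    (h : ∀ x, |re (inner 𝕜 (T x) x)| ≤ c * ‖x‖ ^ 2) : ‖T‖ ≤ c := by
  rw [T.norm_eq_iSup_rayleighQuotient hT]
  refine ciSup_le fun x => ?_
  rcases eq_or_ne x 0 with rfl | hx
  · simpa using hc
  · rw [ContinuousLinearMap.rayleighQuotient, ContinuousLinearMap.reApplyInnerSelf_apply,
      abs_div, abs_sq, div_le_iff₀ (by positivity)]
    exact h x

theorem abs_sub_mul_le_of_le_of_le {ζ α s q : ℝ} (hζ0 : 0 ≤ ζ) (hζ2 : ζ < 2)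
    (hα : |α - 1| ≤ ζ * (1 - ζ) / 2) (hs : 0 ≤ s)
    (hlo : (1 + ζ / 2)⁻¹ * s ≤ q) (hhi : q ≤ (1 - ζ / 2)⁻¹ * s) :
    |s - α * q| ≤ ζ * s := by
  rw [inv_mul_le_iff₀ (by linarith)] at hlo
  rw [le_inv_mul_iff₀ (by linarith)] at hhi
  have hq : 0 ≤ q := by nlinarith
  have hsq : |s - q| ≤ ζ / 2 * q := abs_le.mpr ⟨by linarith, by linarith⟩
  calc |s - α * q| = |(s - q) - (α - 1) * q| := by ring_nf
    _ ≤ |s - q| + |α - 1| * q := (abs_sub _ _).trans_eq (by rw [abs_mul, abs_of_nonneg hq])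
    _ ≤ ζ / 2 * q + ζ * (1 - ζ) / 2 * q := by gcongr
    _ = ζ * ((1 - ζ / 2) * q) := by ring
    _ ≤ ζ * s := by gcongr

theorem ContinuousLinearMap.norm_one_sub_smul_le
    {E : Type*} [NormedAddCommGroup E] [InnerProductSpace ℝ E]
    {T : E →L[ℝ] E} (hT : (T : E →ₗ[ℝ] E).IsSymmetric) {ζ α : ℝ} (hζ0 : 0 ≤ ζ) (hζ2 : ζ < 2)
    (hlo : ∀ x, (1 + ζ / 2)⁻¹ * ‖x‖ ^ 2 ≤ inner ℝ (T x) x)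
    (hhi : ∀ x, inner ℝ (T x) x ≤ (1 - ζ / 2)⁻¹ * ‖x‖ ^ 2)
    (hα : |α - 1| ≤ ζ * (1 - ζ) / 2) :
    ‖1 - α • T‖ ≤ ζ := by
  have hS : ((1 - α • T : E →L[ℝ] E) : E →ₗ[ℝ] E).IsSymmetric := by
    simpa using LinearMap.IsSymmetric.one.sub (hT.smul (conj_trivial α))
  refine opNorm_le_of_abs_re_inner_self_le hS hζ0 fun x => ?_
  have := abs_sub_mul_le_of_le_of_le hζ0 hζ2 hα (sq_nonneg ‖x‖) (hlo x) (hhi x)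
  simpa [inner_sub_left, inner_smul_left, real_inner_self_eq_norm_sq] using this

section

variable {n : Type*} [Fintype n] [DecidableEq n]

theorem Matrix.PosSemidef.mul_norm_sq_le_inner {A : Matrix n n ℝ} {c : ℝ}
    (h : (A - c • 1).PosSemidef) (x : EuclideanSpace ℝ n) :
    c * ‖x‖ ^ 2 ≤ inner ℝ (toEuclideanLin A x) x := by
  have := (isPositive_toEuclideanLin_iff.mpr h).re_inner_nonneg_left x
  simpa [inner_sub_left, inner_smul_left, real_inner_self_eq_norm_sq] using this

theorem Matrix.PosSemidef.inner_le_mul_norm_sq {A : Matrix n n ℝ} {c : ℝ}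
    (h : (c • 1 - A).PosSemidef) (x : EuclideanSpace ℝ n) :
    inner ℝ (toEuclideanLin A x) x ≤ c * ‖x‖ ^ 2 := by
  have := (isPositive_toEuclideanLin_iff.mpr h).re_inner_nonneg_left x
  simpa [inner_sub_left, inner_smul_left, real_inner_self_eq_norm_sq] using this

end

theorem stmt16 {m : ℕ} (M : Matrix (Fin m) (Fin m) ℝ) (ζ α : ℝ)
    (hζ0 : 0 ≤ ζ) (hζ1 : ζ < 1)
    (hsym : M.IsHermitian)
    (h1 : (M - (1 + ζ/2)⁻¹ • (1 : Matrix (Fin m) (Fin m) ℝ)).PosSemidef)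
    (h2 : ((1 - ζ/2)⁻¹ • (1 : Matrix (Fin m) (Fin m) ℝ) - M).PosSemidef)
    (hα : |α - 1| ≤ ζ * (1 - ζ) / 2) :
    specNorm ((1 : Matrix (Fin m) (Fin m) ℝ) - α • M) ≤ ζ := by
  have := ContinuousLinearMap.norm_one_sub_smul_le (T := toEuclideanCLM (n := Fin m) (𝕜 := ℝ) M)
    (isSymmetric_toEuclideanLin_iff.mpr hsym) hζ0 (by linarith) h1.mul_norm_sq_le_inner
    h2.inner_le_mul_norm_sq hα
  rwa [← map_one (toEuclideanCLM (n := Fin m) (𝕜 := ℝ)), ← map_smul, ← map_sub] at this
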